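/- The set N of matrices of the form [[ε,0,0],[b,εIₙ,0],[μ,cᵀ,ε]] with ε = ±1 satisfying the isotropy constraints b = λahc and μ = ε cᵀhc/2, specialized to a = εIₙ, λ = ν = ε (so that b = εhc·ε), forms a normal subgroup of the isotropy group H of p₀ in O(h̃), and the quotient H/N is isomorphic to CO(h). -/

import Mathlib

open Matrix

/-- The block matrix `h̃ = [[0,0,-1],[0,h,0],[-1,0,0]]`. -/
noncomputable def htilde (n : ℕ) (h : Matrix (Fin n) (Fin n) ℂ) :
    Matrix (Fin (n + 2)) (Fin (n + 2)) ℂ :=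
  Matrix.of fun i j =>
    if hi0 : (i : ℕ) = 0 then (if (j : ℕ) = n + 1 then -1 else 0)
    else if hil : (i : ℕ) = n + 1 then (if (j : ℕ) = 0 then -1 else 0)
    else if hj0 : (j : ℕ) = 0 then 0
    else if hjl : (j : ℕ) = n + 1 then 0
    else h ⟨(i : ℕ) - 1, by omega⟩ ⟨(j : ℕ) - 1, by omega⟩

/-- The block matrix `[[λ,0,0],[b,a,0],[μ,cᵀ,ν]]`. -/
noncomputable def isoMat (n : ℕ) (lam ν μ : ℂ) (a : Matrix (Fin n) (Fin n) ℂ)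
    (b c : Fin n → ℂ) : Matrix (Fin (n + 2)) (Fin (n + 2)) ℂ :=
  Matrix.of fun i j =>
    if hi0 : (i : ℕ) = 0 then (if (j : ℕ) = 0 then lam else 0)
    else if hil : (i : ℕ) = n + 1 then
      (if hj0 : (j : ℕ) = 0 then μ
       else if hjl : (j : ℕ) = n + 1 then ν
       else c ⟨(j : ℕ) - 1, by omega⟩)
    else
      (if hj0 : (j : ℕ) = 0 then b ⟨(i : ℕ) - 1, by omega⟩
       else if hjl : (j : ℕ) = n + 1 then 0
       else a ⟨(i : ℕ) - 1, by omega⟩ ⟨(j : ℕ) - 1, by omega⟩)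

def emb {n : ℕ} (i : Fin n) : Fin (n + 2) := ⟨i + 1, by omega⟩

section
variable {n : ℕ} (lam ν μ : ℂ) (a : Matrix (Fin n) (Fin n) ℂ) (b c : Fin n → ℂ)
@[simp] lemma isoMat_00 : isoMat n lam ν μ a b c 0 0 = lam := by simp [isoMat]
@[simp] lemma isoMat_0e (j : Fin n) : isoMat n lam ν μ a b c 0 (emb j) = 0 := by
  simp [isoMat, emb]
@[simp] lemma isoMat_0l : isoMat n lam ν μ a b c 0 (Fin.last (n+1)) = 0 := by
  simp [isoMat]
@[simp] lemma isoMat_e0 (i : Fin n) : isoMat n lam ν μ a b c (emb i) 0 = b i := by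
  simp [isoMat, emb]; omega
@[simp] lemma isoMat_ee (i j : Fin n) : isoMat n lam ν μ a b c (emb i) (emb j) = a i j := by
  simp [isoMat, emb, i.is_lt.ne, j.is_lt.ne]
@[simp] lemma isoMat_el (i : Fin n) : isoMat n lam ν μ a b c (emb i) (Fin.last (n+1)) = 0 := by
  simp [isoMat, emb]; omega
@[simp] lemma isoMat_l0 : isoMat n lam ν μ a b c (Fin.last (n+1)) 0 = μ := by
  simp [isoMat]
@[simp] lemma isoMat_le (j : Fin n) : isoMat n lam ν μ a b c (Fin.last (n+1)) (emb j) = c j := by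
  simp [isoMat, emb]; omega
@[simp] lemma isoMat_ll : isoMat n lam ν μ a b c (Fin.last (n+1)) (Fin.last (n+1)) = ν := by
  simp [isoMat]
end

section
variable {n : ℕ}

lemma sum_split (f : Fin (n+2) → ℂ) :
    ∑ k, f k = f 0 + (∑ i : Fin n, f (emb i)) + f (Fin.last (n+1)) := by
  rw [Fin.sum_univ_succ, Fin.sum_univ_castSucc]
  have h1 : ∀ i : Fin n, f (i.castSucc).succ = f (emb i) := by intro i; rfl
  have h2 : f (Fin.last n).succ = f (Fin.last (n+1)) := by rfl
  simp only [h1, h2]; ring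

lemma fin_cases3 (i : Fin (n+2)) : i = 0 ∨ i = Fin.last (n+1) ∨ ∃ k : Fin n, i = emb k := by
  rcases i with ⟨iv, hi⟩
  by_cases h0 : iv = 0
  · left; simp [Fin.ext_iff, h0]
  by_cases hl : iv = n+1
  · right; left; simp [Fin.ext_iff, hl]
  · right; right; exact ⟨⟨iv-1, by omega⟩, by simp [emb, Fin.ext_iff]; omega⟩

@[simp] lemma emb_eq_emb {i j : Fin n} : (emb i : Fin (n+2)) = emb j ↔ i = j := by
  simp [emb, Fin.ext_iff]
@[simp] lemma zero_ne_emb (i : Fin n) : (0 : Fin (n+2)) ≠ emb i := by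
  simp [emb, Fin.ext_iff]
@[simp] lemma emb_ne_zero (i : Fin n) : (emb i : Fin (n+2)) ≠ 0 := by
  simp [emb, Fin.ext_iff]
@[simp] lemma last_ne_emb (i : Fin n) : Fin.last (n+1) ≠ emb i := by
  simp [emb, Fin.ext_iff]; omega
@[simp] lemma emb_ne_last (i : Fin n) : (emb i : Fin (n+2)) ≠ Fin.last (n+1) := by
  simp [emb, Fin.ext_iff]; omega
@[simp] lemma zero_ne_last' : (0 : Fin (n+2)) ≠ Fin.last (n+1) := by
  simp [Fin.ext_iff]
@[simp] lemma last_ne_zero' : (Fin.last (n+1) : Fin (n+2)) ≠ 0 := by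
  simp [Fin.ext_iff]

lemma isoMat_mul (lam₁ ν₁ μ₁ lam₂ ν₂ μ₂ : ℂ) (a₁ a₂ : Matrix (Fin n) (Fin n) ℂ)
    (b₁ c₁ b₂ c₂ : Fin n → ℂ) :
    isoMat n lam₁ ν₁ μ₁ a₁ b₁ c₁ * isoMat n lam₂ ν₂ μ₂ a₂ b₂ c₂ =
      isoMat n (lam₁ * lam₂) (ν₁ * ν₂) (μ₁ * lam₂ + c₁ ⬝ᵥ b₂ + ν₁ * μ₂)
        (a₁ * a₂) (fun i => b₁ i * lam₂ + (a₁ *ᵥ b₂) i)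
        (fun j => (c₁ ᵥ* a₂) j + ν₁ * c₂ j) := by
  ext i j
  rw [Matrix.mul_apply, sum_split]
  rcases fin_cases3 i with rfl | rfl | ⟨k, rfl⟩ <;>
    rcases fin_cases3 j with rfl | rfl | ⟨l, rfl⟩ <;>
      simp [Matrix.mul_apply, dotProduct, mulVec, vecMul, Finset.mul_sum, Finset.sum_add_distrib]

lemma isoMat_one : isoMat n 1 1 0 1 0 0 = 1 := by
  ext i j
  rcases fin_cases3 i with rfl | rfl | ⟨k, rfl⟩ <;>
    rcases fin_cases3 j with rfl | rfl | ⟨l, rfl⟩ <;>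
      simp [Matrix.one_apply]

def coreM (n : ℕ) (M : Matrix (Fin (n+2)) (Fin (n+2)) ℂ) : Matrix (Fin n) (Fin n) ℂ :=
  Matrix.of fun i j => M 0 0 * M (emb i) (emb j)

lemma core_isoMat (lam ν μ : ℂ) (a : Matrix (Fin n) (Fin n) ℂ) (b c : Fin n → ℂ) :
    coreM n (isoMat n lam ν μ a b c) = lam • a := by
  ext i j; simp [coreM]
end

/-- Let `H ⊂ O(h̃)` be the isotropy group of `p₀` consisting of the matrices
`[[λ,0,0],[b,a,0],[μ,cᵀ,ν]]` with `λν = 1`, `ahaᵀ = h`, `b = λahc`, `μ = λcᵀhc/2`.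
The subset `N` of such matrices with `a = ±1ₙ`, `λ = ν = ±1` (same sign) is a
normal subgroup of `H`, and `H / N ≅ CO(h)`. -/
theorem stmt_8 (n : ℕ) (hn : 0 < n) (h : Matrix (Fin n) (Fin n) ℂ)
    (hsym : h.IsSymm) (hinv : IsUnit h)
    (CO : Subgroup (GL (Fin n) ℂ))
    (hCO : ∀ g : GL (Fin n) ℂ, g ∈ CO ↔
      ∃ (lam : ℂ) (a : Matrix (Fin n) (Fin n) ℂ),
        lam ≠ 0 ∧ a * h * aᵀ = h ∧
        (g : Matrix (Fin n) (Fin n) ℂ) = lam • a)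
    (H : Subgroup (GL (Fin (n + 2)) ℂ))
    (hH : ∀ g : GL (Fin (n + 2)) ℂ, g ∈ H ↔
      ∃ (lam ν μ : ℂ) (a : Matrix (Fin n) (Fin n) ℂ) (b c : Fin n → ℂ),
        lam * ν = 1 ∧ a * h * aᵀ = h ∧
        b = lam • a.mulVec (h.mulVec c) ∧
        μ = lam * (c ⬝ᵥ h.mulVec c) / 2 ∧
        (g : Matrix (Fin (n + 2)) (Fin (n + 2)) ℂ) = isoMat n lam ν μ a b c) :
    ∃ N : Subgroup H, N.Normal ∧
      (∀ g : H, g ∈ N ↔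
        ∃ (ε : ℂ) (c : Fin n → ℂ), (ε = 1 ∨ ε = -1) ∧
          ((g : GL (Fin (n + 2)) ℂ) : Matrix (Fin (n + 2)) (Fin (n + 2)) ℂ) =
            isoMat n ε ε (ε * (c ⬝ᵥ h.mulVec c) / 2)
              (ε • (1 : Matrix (Fin n) (Fin n) ℂ)) (h.mulVec c) c) ∧
      ∃ φ : H →* CO, Function.Surjective φ ∧ φ.ker = N := by
  classical
  -- `a` is a unit whenever `a * h * aᵀ = h`
  have haunit : ∀ a : Matrix (Fin n) (Fin n) ℂ, a * h * aᵀ = h → IsUnit a := by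
    intro a hah
    rw [Matrix.isUnit_iff_isUnit_det]
    have hd : IsUnit h.det := (Matrix.isUnit_iff_isUnit_det h).1 hinv
    rw [← hah] at hd
    simp only [Matrix.det_mul, Matrix.det_transpose] at hd
    exact isUnit_of_mul_isUnit_right hd
  have hMform : ∀ g : H, ∃ (lam ν μ : ℂ) (a : Matrix (Fin n) (Fin n) ℂ) (b c : Fin n → ℂ),
      lam * ν = 1 ∧ a * h * aᵀ = h ∧
      b = lam • a.mulVec (h.mulVec c) ∧ μ = lam * (c ⬝ᵥ h.mulVec c) / 2 ∧
      ((g : GL (Fin (n+2)) ℂ) : Matrix (Fin (n+2)) (Fin (n+2)) ℂ) = isoMat n lam ν μ a b c :=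
    fun g => (hH g).1 g.2
  have hunit : ∀ g : H,
      IsUnit (coreM n ((g : GL (Fin (n+2)) ℂ) : Matrix (Fin (n+2)) (Fin (n+2)) ℂ)) := by
    intro g
    obtain ⟨lam, ν, μ, a, b, c, hln, hah, -, -, hM⟩ := hMform g
    rw [hM, core_isoMat]
    have hlam : lam ≠ 0 := left_ne_zero_of_mul_eq_one hln
    rw [Matrix.isUnit_iff_isUnit_det, Matrix.det_smul, Fintype.card_fin]
    exact ((isUnit_iff_ne_zero.2 hlam).pow n).mul
      ((Matrix.isUnit_iff_isUnit_det a).1 (haunit a hah))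
  have hmemCO : ∀ g : H, ((hunit g).unit : GL (Fin n) ℂ) ∈ CO := by
    intro g
    obtain ⟨lam, ν, μ, a, b, c, hln, hah, -, -, hM⟩ := hMform g
    rw [hCO]
    exact ⟨lam, a, left_ne_zero_of_mul_eq_one hln, hah, by
      rw [IsUnit.unit_spec, hM, core_isoMat]⟩
  let φ : H →* CO := MonoidHom.mk' (fun g => ⟨(hunit g).unit, hmemCO g⟩) (by
    intro g₁ g₂
    refine Subtype.ext (Units.ext ?_)
    simp only [Subgroup.coe_mul, Units.val_mul, IsUnit.unit_spec]
    obtain ⟨lam₁, ν₁, μ₁, a₁, b₁, c₁, hln₁, hah₁, -, -, hM₁⟩ := hMform g₁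
    obtain ⟨lam₂, ν₂, μ₂, a₂, b₂, c₂, hln₂, hah₂, -, -, hM₂⟩ := hMform g₂
    rw [hM₁, hM₂, isoMat_mul, core_isoMat, core_isoMat, core_isoMat,
      smul_mul_assoc, mul_smul_comm, smul_smul])
  have hφval : ∀ g : H,
      ((φ g : GL (Fin n) ℂ) : Matrix (Fin n) (Fin n) ℂ)
        = coreM n ((g : GL (Fin (n+2)) ℂ) : Matrix (Fin (n+2)) (Fin (n+2)) ℂ) :=
    fun g => IsUnit.unit_spec (hunit g)
  have hker : ∀ g : H, φ g = 1 ↔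
      coreM n ((g : GL (Fin (n+2)) ℂ) : Matrix (Fin (n+2)) (Fin (n+2)) ℂ) = 1 := by
    intro g
    rw [Subtype.ext_iff, Units.ext_iff, OneMemClass.coe_one, Units.val_one, hφval g]
  have hne : h ≠ 0 := by
    intro h0
    have hd : IsUnit h.det := (Matrix.isUnit_iff_isUnit_det h).1 hinv
    have : Nonempty (Fin n) := ⟨⟨0, hn⟩⟩
    rw [h0, Matrix.det_zero] at hd
    exact hd.ne_zero rfl
  refine ⟨φ.ker, MonoidHom.normal_ker φ, ?_, φ, ?_, rfl⟩
  · intro g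
    rw [MonoidHom.mem_ker, hker g]
    constructor
    · intro hcg
      obtain ⟨lam, ν, μ, a, b, c, hln, hah, hb, hμ, hM⟩ := hMform g
      rw [hM, core_isoMat] at hcg
      have hlam : lam ≠ 0 := left_ne_zero_of_mul_eq_one hln
      have ha : a = lam⁻¹ • (1 : Matrix (Fin n) (Fin n) ℂ) := by
        rw [← hcg, smul_smul, inv_mul_cancel₀ hlam, one_smul]
      have hh : (lam⁻¹ * lam⁻¹) • h = h := by
        conv_rhs => rw [← hah, ha]
        rw [Matrix.transpose_smul, Matrix.transpose_one, Matrix.smul_mul, Matrix.smul_mul,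
          Matrix.one_mul, Matrix.mul_smul, Matrix.mul_one, smul_smul]
      have hinv2 : lam⁻¹ * lam⁻¹ = 1 := by
        by_contra hne1
        apply hne
        have hz : (lam⁻¹ * lam⁻¹ - 1) • h = 0 := by
          rw [sub_smul, one_smul, hh, sub_self]
        rcases smul_eq_zero.1 hz with h1 | h2
        · exact absurd (by linear_combination h1) hne1
        · exact h2
      have hsq : lam * lam = 1 := by
        rw [← mul_inv] at hinv2
        exact inv_eq_one.1 hinv2
      have hinvlam : lam⁻¹ = lam := inv_eq_of_mul_eq_one_right hsq
      have hν : ν = lam := by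
        have : lam * ν = lam * lam := by rw [hln, hsq]
        exact mul_left_cancel₀ hlam this
      have hb' : b = h.mulVec c := by
        rw [hb, ha, Matrix.smul_mulVec, Matrix.one_mulVec, smul_smul,
          mul_inv_cancel₀ hlam, one_smul]
      refine ⟨lam, c, mul_self_eq_one_iff.1 hsq, ?_⟩
      rw [hM, hν, hμ, hb']
      congr 1
      rw [ha, hinvlam]
    · rintro ⟨ε, c, hε, hM⟩
      have hsq : ε * ε = 1 := by rcases hε with rfl | rfl <;> ring
      rw [hM, core_isoMat, smul_smul, hsq, one_smul]
  · intro x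
    obtain ⟨lam, a, hlam, hah, hx⟩ := (hCO x).1 x.2
    obtain ⟨u, hu⟩ := haunit a hah
    have hz0 : (h.mulVec (0 : Fin n → ℂ)) = 0 := Matrix.mulVec_zero h
    have e1 : isoMat n lam lam⁻¹ 0 a 0 0 * isoMat n lam⁻¹ lam 0 (↑u⁻¹) 0 0 = 1 := by
      rw [isoMat_mul]
      have hau : a * (↑u⁻¹ : Matrix (Fin n) (Fin n) ℂ) = 1 := by rw [← hu]; exact u.mul_inv
      have hz1 : (fun i => (0 : Fin n → ℂ) i * lam⁻¹ + (a *ᵥ (0 : Fin n → ℂ)) i)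
          = (0 : Fin n → ℂ) := by funext i; simp
      have hz2 : (fun j => ((0 : Fin n → ℂ) ᵥ* (↑u⁻¹ : Matrix (Fin n) (Fin n) ℂ)) j
          + lam⁻¹ * (0 : Fin n → ℂ) j) = (0 : Fin n → ℂ) := by funext j; simp
      rw [hau, hz1, hz2, mul_inv_cancel₀ hlam, inv_mul_cancel₀ hlam]
      simpa using isoMat_one
    have e2 : isoMat n lam⁻¹ lam 0 (↑u⁻¹) 0 0 * isoMat n lam lam⁻¹ 0 a 0 0 = 1 := by
      rw [isoMat_mul]
      have hau : (↑u⁻¹ : Matrix (Fin n) (Fin n) ℂ) * a = 1 := by rw [← hu]; exact u.inv_mul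
      have hz1 : (fun i => (0 : Fin n → ℂ) i * lam + ((↑u⁻¹ : Matrix (Fin n) (Fin n) ℂ)
          *ᵥ (0 : Fin n → ℂ)) i) = (0 : Fin n → ℂ) := by funext i; simp
      have hz2 : (fun j => ((0 : Fin n → ℂ) ᵥ* a) j + lam * (0 : Fin n → ℂ) j)
          = (0 : Fin n → ℂ) := by funext j; simp
      rw [hau, hz1, hz2, mul_inv_cancel₀ hlam, inv_mul_cancel₀ hlam]
      simpa using isoMat_one
    refine ⟨⟨⟨isoMat n lam lam⁻¹ 0 a 0 0, isoMat n lam⁻¹ lam 0 (↑u⁻¹) 0 0, e1, e2⟩, ?_⟩, ?_⟩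
    · rw [hH]
      exact ⟨lam, lam⁻¹, 0, a, 0, 0, mul_inv_cancel₀ hlam, hah,
        by simp [hz0], by simp, rfl⟩
    · refine Subtype.ext (Units.ext ?_)
      rw [hφval]
      show coreM n (isoMat n lam lam⁻¹ 0 a 0 0) = _
      rw [core_isoMat, ← hx]
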